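/- Let G be a finite graph and φ : V → [c] a distance-k weak c-coloring (every node v has some node u at distance at most k with φ(u) ≠ φ(v)). For each node v let u(v) be a node of different color from v at minimum distance from v, with ties broken by smallest color φ(u). Define φ'(v) = (φ(v), dist(v,u(v)) mod 2). Then φ' is a distance-1 weak 2c-coloring: every node v has a neighbor w with φ'(w) ≠ φ'(v). -/
import Mathlib


/-- Distance reduction for weak colorings: from a distance-`k` weak `c`-coloring
`φ`, appending the parity of the distance to a chosen closest differently
colored node (ties broken by smallest color) yields a distance-1 weak
`2c`-coloring. -/
theorem distance_reduction_weak_coloring {V : Type*} [Fintype V]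
    (G : SimpleGraph V) (hconn : G.Connected)
    (k c : ℕ) (φ : V → Fin c)
    (hweak : ∀ v : V, ∃ u : V, G.dist v u ≤ k ∧ φ u ≠ φ v)
    (u : V → V)
    (hdiff : ∀ v : V, φ (u v) ≠ φ v)
    (hclosest : ∀ v w : V, φ w ≠ φ v → G.dist v (u v) ≤ G.dist v w)
    (htie : ∀ v w : V, φ w ≠ φ v → G.dist v w = G.dist v (u v) →
      φ (u v) ≤ φ w) :
    ∀ v : V, ∃ w : V, G.Adj v w ∧
      (φ w, G.dist w (u w) % 2) ≠ (φ v, G.dist v (u v) % 2) := by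
  intro v
  have hne : v ≠ u v := fun h => hdiff v (by rw [← h])
  set d := G.dist v (u v) with hd
  have hdpos : 0 < d := hconn.pos_dist_of_ne hne
  obtain ⟨p, hp⟩ := (hconn v (u v)).exists_walk_length_eq_dist
  have hnil : ¬ p.Nil := by
    intro h
    have := SimpleGraph.Walk.nil_iff_length_eq.mp h
    omega
  set w := p.getVert 1 with hw
  have hadj : G.Adj v w := p.adj_snd hnil
  have hq : (p.tail).length + 1 = p.length := p.length_tail_add_one hnil
  by_cases hφ : φ w = φ v
  · -- same color neighbor: parity differs
    refine ⟨w, hadj, ?_⟩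
    have h1 : G.dist w (u v) ≤ d - 1 := by
      have h0 : G.dist w (u v) ≤ p.tail.length := SimpleGraph.dist_le p.tail
      omega
    have h2 : G.dist w (u w) ≤ d - 1 :=
      le_trans (hclosest w (u v) (hφ ▸ hdiff v)) h1
    have h3 : d ≤ G.dist v (u w) := hclosest v (u w) (hφ ▸ hdiff w)
    have h4 : G.dist v (u w) ≤ G.dist v w + G.dist w (u w) :=
      hconn.dist_triangle
    have h5 : G.dist v w ≤ 1 := SimpleGraph.dist_le (hadj.toWalk)
    have heq : G.dist w (u w) = d - 1 := by omega
    intro hcontra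
    have := (Prod.mk.injEq _ _ _ _).mp hcontra
    omega
  · -- different color neighbor
    exact ⟨w, hadj, fun hcontra =>
      hφ ((Prod.mk.injEq _ _ _ _).mp hcontra).1⟩
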